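/- Let r,k be positive integers with r ≤ k, set a = r/k, and define Q(a,z) = Γ(a,z)/Γ(a). For all z ≥ 0, the two-sided bound 1 − (1 − exp(−Γ(1+a)^{−1/a} z))^a ≤ Q(a,z) ≤ 1 − (1 − e^{−z})^a holds. -/

import Mathlib

open MeasureTheory Real Filter ProbabilityTheory

/-- Upper incomplete Gamma function `Γ(a,x) = ∫_x^∞ e^{-t} t^{a-1} dt`. -/
noncomputable def upperGamma (a x : ℝ) : ℝ := ∫ t in Set.Ioi x, Real.exp (-t) * t ^ (a - 1)

/-- Regularized upper incomplete Gamma function `Q(a,x) = Γ(a,x)/Γ(a)`. -/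
noncomputable def regQ (a x : ℝ) : ℝ := upperGamma a x / Real.Gamma a

/-!
Write `P = 1 - Q` for the distribution function of the Gamma(a) law and
`W_α(x) = (1 - e^{-αx})^a`. Both rise from `0` at `x = 0` to `1` at `∞`, and
`W_α' = exp (L_α) * P'` for an explicit log density ratio `L_α`. If `L_α` stays negative once it
is negative, then `W_α - P` first increases and then decreases, so it is `≥ 0` between its zeros
at `0` and `∞`; with `-L_α` in place of `L_α` one gets `P ≥ W_α` instead.

Because `a ≤ 1` and `t ↦ 1/t - 1/(e^t - 1)` is decreasing, `L_1` is increasing, which gives the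
bound `W_1 ≤ P`, and every `L_α` is concave. The choice `α = Γ(1 + a)^{-1/a}` is exactly the one
making `L_α(0+) = 0`, and a concave function vanishing at `0+` stays negative after its first
negative value, which gives `P ≤ W_α`.
-/

open Set Topology

theorem nonneg_of_deriv_neg_imp_nonpos {h h' : ℝ → ℝ} (h0 : h 0 = 0)
    (hc0 : ContinuousWithinAt h (Ici 0) 0) (hd : ∀ x ∈ Ioi 0, HasDerivAt h (h' x) x)
    (htop : Tendsto h atTop (𝓝 0))
    (hsign : ∀ x y, 0 < x → x ≤ y → h' x < 0 → h' y ≤ 0) {y : ℝ} (hy : 0 ≤ y) : 0 ≤ h y := by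
  rcases hy.eq_or_lt with rfl | hy
  · exact h0.ge
  have hcont : ∀ x ∈ Ioi (0 : ℝ), ContinuousAt h x := fun x hx => (hd x hx).continuousAt
  by_cases hpos : ∀ x ∈ Ioc 0 y, 0 ≤ h' x
  · have hmono : MonotoneOn h (Icc 0 y) := by
      have hcontIcc : ContinuousOn h (Icc 0 y) := fun x hx => by
        rcases hx.1.eq_or_lt with rfl | hx0
        · exact hc0.mono Icc_subset_Ici_self
        · exact (hcont x hx0).continuousWithinAt
      refine monotoneOn_of_hasDerivWithinAt_nonneg (f' := h') (convex_Icc 0 y) hcontIcc ?_ ?_ <;>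
        rw [interior_Icc]
      · exact fun x hx => (hd x hx.1).hasDerivWithinAt
      · exact fun x hx => hpos x ⟨hx.1, hx.2.le⟩
    simpa [h0] using hmono (left_mem_Icc.2 hy.le) (right_mem_Icc.2 hy.le) hy.le
  · push Not at hpos
    obtain ⟨x, hx, hx'⟩ := hpos
    have hanti : AntitoneOn h (Ici y) := by
      refine antitoneOn_of_hasDerivWithinAt_nonpos (f' := h') (convex_Ici y)
        (fun t ht => (hcont t (hy.trans_le ht)).continuousWithinAt) ?_ ?_ <;>
        rw [interior_Ici]
      · exact fun t ht => (hd t (hy.trans ht)).hasDerivWithinAt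
      · exact fun t ht => hsign x t hx.1 (hx.2.trans ht.le) hx'
    refine le_of_tendsto htop ?_
    filter_upwards [eventually_ge_atTop y] with t ht
    exact hanti self_mem_Ici ht ht

theorem le_of_hasDerivAt_exp_mul_of_neg_imp_neg {F G g L : ℝ → ℝ} (h0 : F 0 = G 0)
    (hF0 : ContinuousWithinAt F (Ici 0) 0) (hG0 : ContinuousWithinAt G (Ici 0) 0)
    (hF : ∀ x ∈ Ioi 0, HasDerivAt F (exp (L x) * g x) x) (hG : ∀ x ∈ Ioi 0, HasDerivAt G (g x) x)
    (hg : ∀ x ∈ Ioi 0, 0 < g x) {l : ℝ} (hFtop : Tendsto F atTop (𝓝 l))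
    (hGtop : Tendsto G atTop (𝓝 l)) (hL : ∀ x y, 0 < x → x ≤ y → L x < 0 → L y < 0)
    {z : ℝ} (hz : 0 ≤ z) : G z ≤ F z := by
  have hsign : ∀ x ∈ Ioi (0 : ℝ), (exp (L x) - 1) * g x < 0 ↔ L x < 0 := fun x hx => by
    simpa only [zero_mul, sub_neg, exp_lt_one_iff] using
      mul_lt_mul_iff_of_pos_right (b := exp (L x) - 1) (c := 0) (hg x hx)
  refine sub_nonneg.1 (nonneg_of_deriv_neg_imp_nonpos (h := fun x => F x - G x)
    (h' := fun x => (exp (L x) - 1) * g x) (sub_eq_zero.2 h0) (hF0.sub hG0)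
    (fun x hx => ((hF x hx).sub (hG x hx)).congr_deriv (by ring)) ?_
    (fun x y hx hxy hneg => ?_) hz)
  · simpa using hFtop.sub hGtop
  · exact ((hsign y (hx.trans_le hxy)).2 (hL x y hx hxy ((hsign x hx).1 hneg))).le

theorem ConcaveOn.neg_of_neg_of_tendsto_nhdsGT_zero {D : ℝ → ℝ} (hconc : ConcaveOn ℝ (Ioi 0) D)
    (h0 : Tendsto D (𝓝[>] 0) (𝓝 0)) {x y : ℝ} (hx : 0 < x) (hxy : x ≤ y) (hDx : D x < 0) :
    D y < 0 := by
  rcases hxy.eq_or_lt with rfl | hxy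
  · exact hDx
  have hslope : (D y - D x) / (y - x) ≤ D x / x := by
    have hlim : Tendsto (fun ε => (D x - D ε) / (x - ε)) (𝓝[>] 0) (𝓝 ((D x - 0) / (x - 0))) :=
      (tendsto_const_nhds.sub h0).div (tendsto_const_nhds.sub nhdsWithin_le_nhds)
        (by simpa using hx.ne')
    rw [sub_zero, sub_zero] at hlim
    refine le_of_tendsto_of_tendsto tendsto_const_nhds hlim ?_
    filter_upwards [Ioo_mem_nhdsGT hx] with ε hε
    exact hconc.slope_anti_adjacent hε.1 (hx.trans hxy) hε.2 hxy
  have hdiff := (div_lt_iff₀ (sub_pos.2 hxy)).1 (hslope.trans_lt (div_neg_of_neg_of_pos hDx hx))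
  linarith

-- `exp t - 1 = 2 exp (t / 2) sinh (t / 2)` and `t / 2 ≤ sinh (t / 2)`
theorem mul_exp_half_le_exp_sub_one {t : ℝ} (ht : 0 ≤ t) : t * exp (t / 2) ≤ exp t - 1 := by
  have hsinh : t / 2 ≤ sinh (t / 2) := self_le_sinh_iff.2 (by linarith)
  have hsq : exp (t / 2) * exp (t / 2) = exp t := by rw [← exp_add]; ring_nf
  have hinv : exp (t / 2) * exp (-(t / 2)) = 1 := by rw [← exp_add]; simp
  rw [sinh_eq] at hsinh
  nlinarith [mul_le_mul_of_nonneg_left hsinh (exp_pos (t / 2)).le]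

theorem inv_exp_sub_one_le_inv {t : ℝ} (ht : 0 < t) : (exp t - 1)⁻¹ ≤ t⁻¹ :=
  inv_anti₀ ht (by linarith [add_one_le_exp t])

theorem antitoneOn_inv_sub_inv_exp_sub_one :
    AntitoneOn (fun t => t⁻¹ - (exp t - 1)⁻¹) (Ioi 0) := by
  have hderiv : ∀ t ∈ Ioi (0 : ℝ), HasDerivAt (fun t => t⁻¹ - (exp t - 1)⁻¹)
      (exp t / (exp t - 1) ^ 2 - (t ^ 2)⁻¹) t := fun t (ht : 0 < t) => by
    have hE : exp t - 1 ≠ 0 := by linarith [add_one_lt_exp ht.ne']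
    exact ((hasDerivAt_inv ht.ne').fun_sub
      (((hasDerivAt_exp t).sub_const 1).fun_inv hE)).congr_deriv (by ring)
  refine antitoneOn_of_hasDerivWithinAt_nonpos (convex_Ioi 0)
    (fun t ht => (hderiv t ht).continuousAt.continuousWithinAt)
    (fun t ht => (hderiv t (interior_Ioi.subset ht)).hasDerivWithinAt) fun t ht => ?_
  replace ht : 0 < t := interior_Ioi.subset ht
  have hsq : t ^ 2 * exp t ≤ (exp t - 1) ^ 2 := by
    have := pow_le_pow_left₀ (by positivity) (mul_exp_half_le_exp_sub_one ht.le) 2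
    rwa [mul_pow, ← exp_nat_mul, show ((2 : ℕ) : ℝ) * (t / 2) = t by ring] at this
  have hE : 0 < exp t - 1 := by linarith [add_one_lt_exp ht.ne']
  rw [sub_nonpos, div_le_iff₀ (by positivity), inv_mul_eq_div, le_div_iff₀ (by positivity)]
  linarith

noncomputable def lowerGamma (a x : ℝ) : ℝ := ∫ t in (0)..x, exp (-t) * t ^ (a - 1)

noncomputable def regP (a x : ℝ) : ℝ := lowerGamma a x / Gamma a

section IncompleteGamma

variable {a x : ℝ}

theorem lowerGamma_zero : lowerGamma a 0 = 0 := intervalIntegral.integral_same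

theorem lowerGamma_add_upperGamma (ha : 0 < a) (hx : 0 ≤ x) :
    lowerGamma a x + upperGamma a x = Gamma a := by
  rw [Gamma_eq_integral ha, ← Ioc_union_Ioi_eq_Ioi hx, lowerGamma, upperGamma,
    intervalIntegral.integral_of_le hx, setIntegral_union (Ioc_disjoint_Ioi le_rfl)
      measurableSet_Ioi ((GammaIntegral_convergent ha).mono_set Ioc_subset_Ioi_self)
      ((GammaIntegral_convergent ha).mono_set (Ioi_subset_Ioi hx))]

theorem hasDerivAt_lowerGamma (ha : 0 < a) (hx : 0 < x) :
    HasDerivAt (lowerGamma a) (exp (-x) * x ^ (a - 1)) x := by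
  have hcont : ContinuousOn (fun t : ℝ => exp (-t) * t ^ (a - 1)) (Ioi 0) := fun t ht =>
    ((continuous_exp.comp continuous_neg).continuousAt.mul
      (continuousAt_rpow_const t (a - 1) (Or.inl (ne_of_gt ht)))).continuousWithinAt
  refine intervalIntegral.integral_hasDerivAt_right ?_
    (hcont.stronglyMeasurableAtFilter isOpen_Ioi x hx) (hcont.continuousAt (Ioi_mem_nhds hx))
  rw [intervalIntegrable_iff_integrableOn_Ioc_of_le hx.le]
  exact (GammaIntegral_convergent ha).mono_set Ioc_subset_Ioi_self

theorem continuousWithinAt_lowerGamma_zero (ha : 0 < a) :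
    ContinuousWithinAt (lowerGamma a) (Ici 0) 0 := by
  have hint : IntegrableOn (fun t : ℝ => exp (-t) * t ^ (a - 1)) (uIcc 0 1) := by
    rw [uIcc_of_le zero_le_one, integrableOn_Icc_iff_integrableOn_Ioc]
    exact (GammaIntegral_convergent ha).mono_set Ioc_subset_Ioi_self
  have hIcc : Icc (0 : ℝ) 1 ∈ 𝓝[≥] 0 := Icc_mem_nhdsGE zero_lt_one
  rw [← uIcc_of_le zero_le_one] at hIcc
  have hprim := intervalIntegral.continuousOn_primitive_interval hint
  exact (hprim 0 left_mem_uIcc).mono_of_mem_nhdsWithin hIcc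

theorem tendsto_lowerGamma_atTop (ha : 0 < a) :
    Tendsto (lowerGamma a) atTop (𝓝 (Gamma a)) := by
  rw [Gamma_eq_integral ha]
  exact intervalIntegral_tendsto_integral_Ioi 0 (GammaIntegral_convergent ha) tendsto_id

theorem regP_zero : regP a 0 = 0 := by rw [regP, lowerGamma_zero, zero_div]

theorem continuousWithinAt_regP_zero (ha : 0 < a) : ContinuousWithinAt (regP a) (Ici 0) 0 :=
  (continuousWithinAt_lowerGamma_zero ha).div_const _

theorem hasDerivAt_regP (ha : 0 < a) (hx : 0 < x) :
    HasDerivAt (regP a) (exp (-x) * x ^ (a - 1) / Gamma a) x :=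
  (hasDerivAt_lowerGamma ha hx).div_const _

theorem tendsto_regP_atTop (ha : 0 < a) : Tendsto (regP a) atTop (𝓝 1) := by
  have h := (tendsto_lowerGamma_atTop ha).div_const (Gamma a)
  rwa [div_self (Gamma_pos_of_pos ha).ne'] at h

theorem regQ_eq_one_sub_regP (ha : 0 < a) (hx : 0 ≤ x) : regQ a x = 1 - regP a x := by
  rw [regQ, regP, eq_sub_iff_add_eq, ← add_div, add_comm, lowerGamma_add_upperGamma ha hx,
    div_self (Gamma_pos_of_pos ha).ne']

end IncompleteGamma

/-- Distribution function of the generalized exponential law. -/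
noncomputable def genExpCDF (a α x : ℝ) : ℝ := (1 - exp (-(α * x))) ^ a

/-- `log` of the ratio of the densities of `genExpCDF a α` and `regP a`. -/
noncomputable def logDensityRatio (a α x : ℝ) : ℝ :=
  log (Gamma (a + 1) * α) + (1 - α) * x + (a - 1) * (log (1 - exp (-(α * x))) - log x)

section GeneralizedExponential

variable {a α x : ℝ}

theorem one_sub_exp_neg_mul_pos (hα : 0 < α) (hx : 0 < x) : 0 < 1 - exp (-(α * x)) :=
  sub_pos.2 (exp_lt_one_iff.2 (neg_neg_of_pos (mul_pos hα hx)))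

theorem hasDerivAt_one_sub_exp_neg_mul (α x : ℝ) :
    HasDerivAt (fun x => 1 - exp (-(α * x))) (α * exp (-(α * x))) x := by
  have := (((hasDerivAt_id x).const_mul α).neg.exp).const_sub 1
  exact this.congr_deriv (by simp [mul_comm])

theorem genExpCDF_zero (ha : a ≠ 0) : genExpCDF a α 0 = 0 := by
  simp [genExpCDF, zero_rpow ha]

theorem continuous_genExpCDF (ha : 0 ≤ a) : Continuous (genExpCDF a α) :=
  (continuous_const.sub (continuous_exp.comp (continuous_const.mul continuous_id).neg)).rpow_const
    fun _ => Or.inr ha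

theorem tendsto_genExpCDF_atTop (hα : 0 < α) : Tendsto (genExpCDF a α) atTop (𝓝 1) := by
  have hexp : Tendsto (fun x => exp (-(α * x))) atTop (𝓝 0) :=
    tendsto_exp_neg_atTop_nhds_zero.comp (tendsto_id.const_mul_atTop hα)
  have hbase : Tendsto (fun x => 1 - exp (-(α * x))) atTop (𝓝 1) := by
    simpa using tendsto_const_nhds.sub hexp
  have h := hbase.rpow_const (p := a) (Or.inl one_ne_zero)
  rwa [one_rpow] at h

theorem hasDerivAt_genExpCDF (hα : 0 < α) (hx : 0 < x) :
    HasDerivAt (genExpCDF a α)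
      (a * (1 - exp (-(α * x))) ^ (a - 1) * (α * exp (-(α * x)))) x := by
  have hpow := Real.hasDerivAt_rpow_const (p := a) (Or.inl (one_sub_exp_neg_mul_pos hα hx).ne')
  exact hpow.comp x (hasDerivAt_one_sub_exp_neg_mul α x)

theorem genExpCDF_deriv_eq_exp_logDensityRatio_mul (ha : 0 < a) (hα : 0 < α) (hx : 0 < x) :
    a * (1 - exp (-(α * x))) ^ (a - 1) * (α * exp (-(α * x)))
      = exp (logDensityRatio a α x) * (exp (-x) * x ^ (a - 1) / Gamma a) := by
  have hu := one_sub_exp_neg_mul_pos hα hx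
  have hpow : ∀ {u : ℝ}, 0 < u → exp ((a - 1) * log u) = u ^ (a - 1) := fun hu => by
    rw [rpow_def_of_pos hu, mul_comm]
  have hexp : exp ((1 - α) * x) * exp (-x) = exp (-(α * x)) := by rw [← exp_add]; ring_nf
  rw [logDensityRatio, exp_add, exp_add, exp_log (by positivity), mul_sub, exp_sub, hpow hu,
    hpow hx, Gamma_add_one ha.ne', ← hexp]
  field_simp

theorem hasDerivAt_logDensityRatio (hα : 0 < α) (hx : 0 < x) :
    HasDerivAt (logDensityRatio a α)
      (1 - α + (1 - a) * α * ((α * x)⁻¹ - (exp (α * x) - 1)⁻¹)) x := by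
  have hlog := ((hasDerivAt_one_sub_exp_neg_mul α x).log
    (one_sub_exp_neg_mul_pos hα hx).ne').sub (hasDerivAt_log hx.ne')
  have h := (((hasDerivAt_id x).const_mul (1 - α)).const_add (log (Gamma (a + 1) * α))).add
    (hlog.const_mul (a - 1))
  refine h.congr_deriv ?_
  have hE : exp (α * x) - 1 ≠ 0 := by
    linarith [add_one_lt_exp (mul_pos hα hx).ne', mul_pos hα hx]
  rw [exp_neg]
  field_simp
  ring

theorem monotoneOn_logDensityRatio_one (ha1 : a ≤ 1) : MonotoneOn (logDensityRatio a 1) (Ioi 0) :=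
  monotoneOn_of_hasDerivWithinAt_nonneg (convex_Ioi 0)
    (fun x hx => (hasDerivAt_logDensityRatio one_pos hx).continuousAt.continuousWithinAt)
    (fun x hx => (hasDerivAt_logDensityRatio one_pos (interior_Ioi.subset hx)).hasDerivWithinAt)
    fun x hx => by
      have := inv_exp_sub_one_le_inv (interior_Ioi.subset hx)
      simp only [sub_self, zero_add, mul_one, one_mul]
      exact mul_nonneg (by linarith) (by linarith)

theorem concaveOn_logDensityRatio (ha1 : a ≤ 1) (hα : 0 < α) :
    ConcaveOn ℝ (Ioi 0) (logDensityRatio a α) := by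
  have hd := fun x (hx : x ∈ Ioi (0 : ℝ)) => hasDerivAt_logDensityRatio (a := a) hα hx
  refine AntitoneOn.concaveOn_of_deriv (convex_Ioi 0)
    (fun x hx => (hd x hx).continuousAt.continuousWithinAt)
    (fun x hx => (hd x (interior_Ioi.subset hx)).differentiableAt.differentiableWithinAt) ?_
  rw [interior_Ioi]
  intro x hx y hy hxy
  rw [(hd x hx).deriv, (hd y hy).deriv]
  have := mul_le_mul_of_nonneg_left (antitoneOn_inv_sub_inv_exp_sub_one (mul_pos hα hx)
    (mul_pos hα hy) (mul_le_mul_of_nonneg_left hxy hα.le)) (mul_nonneg (sub_nonneg.2 ha1) hα.le)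
  linarith

theorem tendsto_logDensityRatio_nhdsGT_zero (ha : -1 < a) (hα : 0 < α) :
    Tendsto (logDensityRatio a α) (𝓝[>] 0) (𝓝 (log (Gamma (a + 1)) + a * log α)) := by
  have hslope : Tendsto (fun x => (1 - exp (-(α * x))) / x) (𝓝[>] 0) (𝓝 α) := by
    simpa [div_eq_inv_mul] using (hasDerivAt_one_sub_exp_neg_mul α 0).tendsto_slope_zero_right
  have hlin : Tendsto (fun x : ℝ => (1 - α) * x) (𝓝[>] 0) (𝓝 0) :=
    ((continuous_const_mul (1 - α)).tendsto' 0 0 (mul_zero _)).mono_left nhdsWithin_le_nhds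
  have h := ((tendsto_const_nhds (x := log (Gamma (a + 1) * α))).add hlin).add
    (((continuousAt_log hα.ne').tendsto.comp hslope).const_mul (a - 1))
  have hlim :
      log (Gamma (a + 1)) + a * log α = log (Gamma (a + 1) * α) + 0 + (a - 1) * log α := by
    rw [log_mul (Gamma_pos_of_pos (by linarith)).ne' hα.ne']
    ring
  rw [hlim]
  refine h.congr' (eventually_mem_nhdsWithin.mono fun x (hx : 0 < x) => ?_)
  simp only [logDensityRatio, Function.comp_apply,
    log_div (one_sub_exp_neg_mul_pos hα hx).ne' hx.ne']

end GeneralizedExponential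

section Bounds

variable {a z : ℝ}

theorem genExpCDF_one_le_regP (ha : 0 < a) (ha1 : a ≤ 1) (hz : 0 ≤ z) :
    genExpCDF a 1 z ≤ regP a z := by
  refine le_of_hasDerivAt_exp_mul_of_neg_imp_neg (F := regP a) (G := genExpCDF a 1)
    (L := fun x => -logDensityRatio a 1 x)
    (by rw [regP_zero, genExpCDF_zero ha.ne']) (continuousWithinAt_regP_zero ha)
    (continuous_genExpCDF ha.le).continuousWithinAt (fun x hx => ?_)
    (fun x hx => hasDerivAt_genExpCDF one_pos hx) (fun x hx => ?_) (tendsto_regP_atTop ha)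
    (tendsto_genExpCDF_atTop one_pos) (fun x y hx hxy hneg => ?_) hz
  · refine (hasDerivAt_regP ha hx).congr_deriv ?_
    rw [genExpCDF_deriv_eq_exp_logDensityRatio_mul ha one_pos hx, ← mul_assoc, ← exp_add,
      neg_add_cancel, exp_zero, one_mul]
  · have := one_sub_exp_neg_mul_pos one_pos hx
    positivity
  · simp only [neg_lt_zero] at hneg ⊢
    exact hneg.trans_le (monotoneOn_logDensityRatio_one ha1 hx (hx.trans_le hxy) hxy)

theorem regP_le_genExpCDF (ha : 0 < a) (ha1 : a ≤ 1) (hz : 0 ≤ z) :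
    regP a z ≤ genExpCDF a (Gamma (1 + a) ^ (-a⁻¹)) z := by
  set α := Gamma (1 + a) ^ (-a⁻¹) with hα_def
  have hΓ : 0 < Gamma (1 + a) := Gamma_pos_of_pos (by linarith)
  have hα : 0 < α := rpow_pos_of_pos hΓ _
  have hL0 : Tendsto (logDensityRatio a α) (𝓝[>] 0) (𝓝 0) := by
    have hlim : log (Gamma (a + 1)) + a * log α = 0 := by
      rw [hα_def, log_rpow hΓ, add_comm a 1]
      field_simp
      ring
    simpa [hlim] using tendsto_logDensityRatio_nhdsGT_zero (a := a) (by linarith) hα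
  refine le_of_hasDerivAt_exp_mul_of_neg_imp_neg (F := genExpCDF a α) (G := regP a)
    (by rw [regP_zero, genExpCDF_zero ha.ne']) (continuous_genExpCDF ha.le).continuousWithinAt
    (continuousWithinAt_regP_zero ha)
    (fun x hx => (hasDerivAt_genExpCDF hα hx).congr_deriv
      (genExpCDF_deriv_eq_exp_logDensityRatio_mul ha hα hx))
    (fun x hx => hasDerivAt_regP ha hx) (fun x (hx : 0 < x) => by positivity)
    (tendsto_genExpCDF_atTop hα) (tendsto_regP_atTop ha)
    (fun x y hx hxy =>
      (concaveOn_logDensityRatio ha1 hα).neg_of_neg_of_tendsto_nhdsGT_zero hL0 hx hxy) hz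

end Bounds

theorem stmt5 (r k : ℕ) (hr : 0 < r) (hrk : r ≤ k) (z : ℝ) (hz : 0 ≤ z) :
    1 - (1 - Real.exp (-(Real.Gamma (1 + (r : ℝ) / k) ^ (-((k : ℝ) / r)) * z))) ^ ((r : ℝ) / k)
        ≤ regQ ((r : ℝ) / k) z ∧
      regQ ((r : ℝ) / k) z ≤ 1 - (1 - Real.exp (-z)) ^ ((r : ℝ) / k) := by
  have hk : (0 : ℝ) < k := by exact_mod_cast hr.trans_le hrk
  have ha : 0 < (r : ℝ) / k := div_pos (by exact_mod_cast hr) hk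
  have ha1 : (r : ℝ) / k ≤ 1 := (div_le_one hk).2 (by exact_mod_cast hrk)
  rw [regQ_eq_one_sub_regP ha hz]
  have hlower := genExpCDF_one_le_regP ha ha1 hz
  have hupper := regP_le_genExpCDF ha ha1 hz
  simp only [genExpCDF, one_mul, inv_div] at hlower hupper
  constructor <;> linarith
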